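/- The Euclidean plane ℝ² has asymptotic dimension at most 2. -/
import Mathlib


open Metric Set

noncomputable section

/-- The word length of `g` with respect to a symmetrized generating set `S ∪ S⁻¹`. -/
noncomputable def wordLength {G : Type*} [Group G] (S : Set G) (g : G) : ℕ :=
  sInf {n : ℕ | ∃ l : List G, l.length = n ∧ (∀ x ∈ l, x ∈ S ∨ x⁻¹ ∈ S) ∧ l.prod = g}

/-- The word metric on a group with respect to a generating set `S`. -/
noncomputable def wordDist {G : Type*} [Group G] (S : Set G) (a b : G) : ℝ :=
  (wordLength S (a⁻¹ * b) : ℝ)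

/-- `AsdimLE d n` : the space with distance function `d` has asymptotic dimension at most `n`:
for every `D > 0` there are `B ≥ 0` and families `U 0, ..., U n` of subsets covering the space,
all of whose members have diameter at most `B`, and such that distinct members of the same
family are at mutual distance greater than `D`. -/
def AsdimLE {X : Type*} (d : X → X → ℝ) (n : ℕ) : Prop :=
  ∀ D : ℝ, 0 < D → ∃ B : ℝ, 0 ≤ B ∧ ∃ U : Fin (n + 1) → Set (Set X),
    (∀ x : X, ∃ i : Fin (n + 1), ∃ u ∈ U i, x ∈ u) ∧
    (∀ i : Fin (n + 1), ∀ u ∈ U i, ∀ x ∈ u, ∀ y ∈ u, d x y ≤ B) ∧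
    (∀ i : Fin (n + 1), ∀ u ∈ U i, ∀ v ∈ U i, u ≠ v → ∀ x ∈ u, ∀ y ∈ v, D < d x y)

/-- The asymptotic dimension of a space with distance function `d`, in `ℕ∞`. -/
noncomputable def asdimD {X : Type*} (d : X → X → ℝ) : ℕ∞ :=
  ⨅ (n : ℕ) (_ : AsdimLE d n), (n : ℕ∞)

/-- The asymptotic dimension of a pseudometric space. -/
noncomputable def asdim (X : Type*) [PseudoMetricSpace X] : ℕ∞ :=
  asdimD (fun x y : X => dist x y)

/-- A brick: `[(3j+k)u, (3j+k)u+3u] × [ku, ku+u]`. -/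
def brick7 (u : ℝ) (j k : ℤ) : Set (EuclideanSpace ℝ (Fin 2)) :=
  {p | ((3*j+k : ℤ) : ℝ)*u ≤ p 0 ∧ p 0 ≤ ((3*j+k : ℤ) : ℝ)*u + 3*u ∧
       ((k : ℤ) : ℝ)*u ≤ p 1 ∧ p 1 ≤ ((k : ℤ) : ℝ)*u + u}

lemma dist_coord7 (p q : EuclideanSpace ℝ (Fin 2)) (i : Fin 2) : |p i - q i| ≤ dist p q := by
  rw [EuclideanSpace.dist_eq, ← Real.sqrt_sq_eq_abs]
  apply Real.sqrt_le_sqrt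
  have := Finset.single_le_sum (f := fun i => dist (p i) (q i) ^ 2)
    (fun i _ => sq_nonneg _) (Finset.mem_univ i)
  simpa [Real.dist_eq, sq_abs] using this

lemma dist_le7 (p q : EuclideanSpace ℝ (Fin 2)) (a b : ℝ)
    (h0 : |p 0 - q 0| ≤ a) (h1 : |p 1 - q 1| ≤ b) : dist p q ≤ a + b := by
  have ha : 0 ≤ a := le_trans (abs_nonneg _) h0
  have hb : 0 ≤ b := le_trans (abs_nonneg _) h1
  rw [EuclideanSpace.dist_eq, Fin.sum_univ_two]
  have h0' : (p 0 - q 0)^2 ≤ a^2 := by nlinarith [abs_nonneg (p 0 - q 0), sq_abs (p 0 - q 0)]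
  have h1' : (p 1 - q 1)^2 ≤ b^2 := by nlinarith [abs_nonneg (p 1 - q 1), sq_abs (p 1 - q 1)]
  have : dist (p 0) (q 0) ^ 2 + dist (p 1) (q 1) ^ 2 ≤ (a+b)^2 := by
    simp only [Real.dist_eq, sq_abs]; nlinarith
  calc Real.sqrt (dist (p 0) (q 0) ^ 2 + dist (p 1) (q 1) ^ 2) ≤ Real.sqrt ((a+b)^2) :=
        Real.sqrt_le_sqrt this
    _ = a + b := Real.sqrt_sq (by linarith)

lemma gap7 {u x y a b : ℝ} (hx : x ≤ a) (hy : b ≤ y) (h : a + u ≤ b) : u ≤ |x - y| := by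
  rw [le_abs]; right; linarith

lemma mulcast7 {u : ℝ} (hu : 0 ≤ u) {m m' : ℤ} (h : m ≤ m') :
    ((m : ℤ) : ℝ)*u ≤ ((m' : ℤ) : ℝ)*u :=
  mul_le_mul_of_nonneg_right (by exact_mod_cast h) hu

lemma asdimLE7 : AsdimLE (fun x y : EuclideanSpace ℝ (Fin 2) => dist x y) 2 := by
  intro D hD
  set u : ℝ := D + 1 with hu
  have hu0 : 0 < u := by simp [hu]; linarith
  refine ⟨4*u, by positivity,
    fun i => {s | ∃ j k : ℤ, (j - k) % 3 = ((i : ℕ) : ℤ) ∧ s = brick7 u j k}, ?_, ?_, ?_⟩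
  · -- coverage
    intro p
    set k : ℤ := ⌊p 1 / u⌋ with hk
    set j : ℤ := ⌊(p 0 / u - k) / 3⌋ with hj
    have hk1 : (k : ℝ) ≤ p 1 / u := Int.floor_le _
    have hk2 : p 1 / u < k + 1 := Int.lt_floor_add_one _
    have hj1 : (j : ℝ) ≤ (p 0 / u - k) / 3 := Int.floor_le _
    have hj2 : (p 0 / u - k) / 3 < j + 1 := Int.lt_floor_add_one _
    refine ⟨⟨((j - k) % 3).toNat, by omega⟩, brick7 u j k,
      ⟨j, k, by simp; omega, rfl⟩, ?_, ?_, ?_, ?_⟩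
    · have h1 : (3*(j:ℝ) + k) ≤ p 0 / u := by linarith
      have := (le_div_iff₀ hu0).mp h1
      push_cast
      linarith
    · have h1 : p 0 / u < 3*(j:ℝ) + k + 3 := by linarith
      have := (div_lt_iff₀ hu0).mp h1
      push_cast
      nlinarith
    · have := (le_div_iff₀ hu0).mp hk1
      linarith
    · have := (div_lt_iff₀ hu0).mp hk2
      nlinarith
  · -- diameter
    rintro i s ⟨j, k, -, rfl⟩ x ⟨hx1, hx2, hx3, hx4⟩ y ⟨hy1, hy2, hy3, hy4⟩
    have h0 : |x 0 - y 0| ≤ 3*u := abs_le.mpr ⟨by linarith, by linarith⟩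
    have h1 : |x 1 - y 1| ≤ u := abs_le.mpr ⟨by linarith, by linarith⟩
    have := dist_le7 x y (3*u) u h0 h1
    simp only
    linarith
  · -- separation
    rintro i s ⟨j, k, hc, rfl⟩ t ⟨j', k', hc', rfl⟩ hne x ⟨hx1, hx2, hx3, hx4⟩ y ⟨hy1, hy2, hy3, hy4⟩
    have hpar : ¬(j = j' ∧ k = k') := by
      rintro ⟨rfl, rfl⟩; exact hne rfl
    have hmod : (j - k) % 3 = (j' - k') % 3 := hc.trans hc'.symm
    have key : u ≤ |x 0 - y 0| ∨ u ≤ |x 1 - y 1| := by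
      have hcases : (k + 2 ≤ k') ∨ (k' + 2 ≤ k) ∨
          (3*j + k + 4 ≤ 3*j' + k') ∨ (3*j' + k' + 4 ≤ 3*j + k) := by
        obtain ⟨t, ht⟩ : (3:ℤ) ∣ ((j - k) - (j' - k')) := by omega
        rcases (by omega : k' = k - 1 ∨ k' = k ∨ k' = k + 1 ∨ k + 2 ≤ k' ∨ k' + 2 ≤ k)
          with h|h|h|h|h <;> subst_eqs <;> omega
      rcases hcases with h | h | h | h
      · right
        refine gap7 hx4 hy3 ?_
        have := mulcast7 hu0.le (show k + 2 ≤ k' by omega)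
        push_cast at this ⊢
        nlinarith
      · right
        rw [abs_sub_comm]
        refine gap7 hy4 hx3 ?_
        have := mulcast7 hu0.le (show k' + 2 ≤ k by omega)
        push_cast at this ⊢
        nlinarith
      · left
        refine gap7 hx2 hy1 ?_
        have := mulcast7 hu0.le (show 3*j + k + 4 ≤ 3*j' + k' from h)
        push_cast at this ⊢
        nlinarith
      · left
        rw [abs_sub_comm]
        refine gap7 hy2 hx1 ?_
        have := mulcast7 hu0.le (show 3*j' + k' + 4 ≤ 3*j + k from h)
        push_cast at this ⊢
        nlinarith
    have hd : u ≤ dist x y := by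
      rcases key with h | h
      · exact le_trans h (dist_coord7 x y 0)
      · exact le_trans h (dist_coord7 x y 1)
    simp only
    linarith

/-- The Euclidean plane has asymptotic dimension at most `2`. -/
theorem stmt7 : asdim (EuclideanSpace ℝ (Fin 2)) ≤ 2 := by
  have h := asdimLE7
  simp only [asdim, asdimD]
  refine le_trans (iInf₂_le 2 h) ?_
  norm_num
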